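/- arXiv:2208.06944 — 2 statements merged into one kernel-verified Lean document; each statement's English description precedes it below -/
import Mathlib

section
/- Let α be irrational with continued fraction denominators q_m and θ ∈ ℝ with ‖2θ + k_j α‖_{ℝ/ℤ} ≤ 10η/q_{2j} for some integer k_j, with 0 < η ≤ 10⁻². Then for any k = k_j + l₁ q_{2j} + l₂ with |l₁| ≤ 10η q_{2j+1}/q_{2j} and 1 ≤ l₂ < q_{2j}, one has ‖2θ + kα‖_{ℝ/ℤ} ≥ 1/(2q_{2j}) − 20η/q_{2j} ≥ 1/(4 q_{2j}). -/
/-!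
Write `q = q_{2j}`. Since `l₂ α = (2θ + k α) - (2θ + k_j α) - l₁ (q α)`, the triangle inequality
on `ℝ/ℤ` gives `‖l₂ α‖ ≤ ‖2θ + k α‖ + ‖2θ + k_j α‖ + |l₁| ‖q α‖`. The left side is at least
`1/(2q)`, and each of the last two terms is at most `10η/q` (the second because
`|l₁| ≤ 10η q_{2j+1}/q` and `‖q α‖ ≤ 1/q_{2j+1}`).
-/

/-- Distance from a real number to the nearest integer, ‖x‖_{ℝ/ℤ}. -/
noncomputable def normZ (x : ℝ) : ℝ := |x - round x|

/-- The Gauss map. -/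
noncomputable def cfGauss (x : ℝ) : ℝ := Int.fract x⁻¹

/-- Partial quotients of α ∈ (0,1): `cfA α n` is the paper's a_{n+1}. -/
noncomputable def cfA (α : ℝ) (n : ℕ) : ℤ := ⌊(cfGauss^[n] α)⁻¹⌋

/-- Continued fraction denominators: q_0 = 1, q_1 = a_1, q_{n+2} = a_{n+2} q_{n+1} + q_n. -/
noncomputable def cfQ (α : ℝ) : ℕ → ℤ
  | 0 => 1
  | 1 => cfA α 0
  | (n + 2) => cfA α (n + 1) * cfQ α (n + 1) + cfQ α n

/-- Continued fraction numerators: p_0 = 0, p_1 = 1, p_{n+2} = a_{n+2} p_{n+1} + p_n. -/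
noncomputable def cfP (α : ℝ) : ℕ → ℤ
  | 0 => 0
  | 1 => 1
  | (n + 2) => cfA α (n + 1) * cfP α (n + 1) + cfP α n

lemma normZ_eq_norm_coe (x : ℝ) : normZ x = ‖(x : UnitAddCircle)‖ :=
  UnitAddCircle.norm_eq.symm

lemma normZ_nonneg (x : ℝ) : 0 ≤ normZ x := abs_nonneg _

lemma normZ_sub_le (x y : ℝ) : normZ (x - y) ≤ normZ x + normZ y := by
  simpa only [normZ_eq_norm_coe, AddCircle.coe_sub] using norm_sub_le _ _

lemma normZ_intCast_mul_le (n : ℤ) (x : ℝ) : normZ (n * x) ≤ |(n : ℝ)| * normZ x := by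
  simpa only [normZ_eq_norm_coe, ← zsmul_eq_mul, AddCircle.coe_zsmul, Int.norm_eq_abs,
    Int.cast_abs] using norm_zsmul_le n (x : UnitAddCircle)

lemma normZ_mul_le_of_shift (x α : ℝ) (k₀ l₁ q l₂ : ℤ) :
    normZ (l₂ * α) ≤ normZ (x + (k₀ + l₁ * q + l₂ : ℤ) * α) + normZ (x + k₀ * α)
      + |(l₁ : ℝ)| * normZ (q * α) := by
  have hdecomp : (l₂ : ℝ) * α
      = (x + (k₀ + l₁ * q + l₂ : ℤ) * α) - (x + k₀ * α) - l₁ * (q * α) := by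
    push_cast; ring
  calc normZ (l₂ * α)
      ≤ normZ ((x + (k₀ + l₁ * q + l₂ : ℤ) * α) - (x + k₀ * α)) + normZ (l₁ * (q * α)) := by
        rw [hdecomp]; exact normZ_sub_le _ _
    _ ≤ _ := add_le_add (normZ_sub_le _ _) (normZ_intCast_mul_le _ _)

theorem stmt7_general (α θ η : ℝ)
    (hη1 : η ≤ 1 / 100) (j : ℕ) (kj : ℤ)
    (hθ : normZ (2 * θ + (kj : ℝ) * α) ≤ 10 * η / (cfQ α (2 * j) : ℝ))
    (hqup : normZ ((cfQ α (2 * j) : ℝ) * α) ≤ 1 / (cfQ α (2 * j + 1) : ℝ))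
    (hqlow : ∀ l : ℤ, 1 ≤ l → l < cfQ α (2 * j) →
      1 / (2 * (cfQ α (2 * j) : ℝ)) ≤ normZ ((l : ℝ) * α))
    (k l₁ l₂ : ℤ) (hk : k = kj + l₁ * cfQ α (2 * j) + l₂)
    (hl₁ : |(l₁ : ℝ)| ≤ 10 * η * (cfQ α (2 * j + 1) : ℝ) / (cfQ α (2 * j) : ℝ))
    (hl₂1 : 1 ≤ l₂) (hl₂2 : l₂ < cfQ α (2 * j)) :
    1 / (2 * (cfQ α (2 * j) : ℝ)) - 20 * η / (cfQ α (2 * j) : ℝ)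
        ≤ normZ (2 * θ + (k : ℝ) * α)
    ∧ 1 / (4 * (cfQ α (2 * j) : ℝ))
        ≤ 1 / (2 * (cfQ α (2 * j) : ℝ)) - 20 * η / (cfQ α (2 * j) : ℝ) := by
  set q := cfQ α (2 * j)
  set q' := cfQ α (2 * j + 1)
  have hq : (0 : ℝ) < q := by exact_mod_cast zero_lt_one.trans (hl₂1.trans_lt hl₂2)
  have hθ0 : 0 ≤ 10 * η / q := (normZ_nonneg _).trans hθ
  have hshift : |(l₁ : ℝ)| * normZ (q * α) ≤ 10 * η / q := by
    rcases le_or_gt (q' : ℝ) 0 with hq' | hq'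
    · have : normZ (q * α) = 0 :=
        le_antisymm (hqup.trans (one_div_nonpos.2 hq')) (normZ_nonneg _)
      rwa [this, mul_zero]
    · calc |(l₁ : ℝ)| * normZ (q * α) ≤ (10 * η * q' / q) * (1 / q') :=
            mul_le_mul hl₁ hqup (normZ_nonneg _) ((abs_nonneg _).trans hl₁)
        _ = 10 * η / q := by field_simp
  have hmain := normZ_mul_le_of_shift (2 * θ) α kj l₁ q l₂
  rw [← hk] at hmain
  constructor
  · linarith [hqlow l₂ hl₂1 hl₂2, show 20 * η / (q : ℝ) = 10 * η / q + 10 * η / q by ring]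
  · have hη : 20 * η / (q : ℝ) ≤ (1 / 4) / q := by gcongr; linarith
    have hquarter : 1 / (2 * q) - (1 / 4) / q = 1 / (4 * (q : ℝ)) := by field_simp; ring
    linarith

/-- small divisor estimate (4) of the Proposition. -/
theorem stmt7 (α θ η : ℝ) (hα : Irrational α) (h0 : 0 < α) (h1 : α < 1)
    (hη0 : 0 < η) (hη1 : η ≤ 1 / 100) (j : ℕ) (kj : ℤ)
    (hθ : normZ (2 * θ + (kj : ℝ) * α) ≤ 10 * η / (cfQ α (2 * j) : ℝ))
    (hqup : normZ ((cfQ α (2 * j) : ℝ) * α) ≤ 1 / (cfQ α (2 * j + 1) : ℝ))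
    (hqlow : ∀ l : ℤ, 1 ≤ l → l < cfQ α (2 * j) →
      1 / (2 * (cfQ α (2 * j) : ℝ)) ≤ normZ ((l : ℝ) * α))
    (k l₁ l₂ : ℤ) (hk : k = kj + l₁ * cfQ α (2 * j) + l₂)
    (hl₁ : |(l₁ : ℝ)| ≤ 10 * η * (cfQ α (2 * j + 1) : ℝ) / (cfQ α (2 * j) : ℝ))
    (hl₂1 : 1 ≤ l₂) (hl₂2 : l₂ < cfQ α (2 * j)) :
    1 / (2 * (cfQ α (2 * j) : ℝ)) - 20 * η / (cfQ α (2 * j) : ℝ)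
        ≤ normZ (2 * θ + (k : ℝ) * α)
    ∧ 1 / (4 * (cfQ α (2 * j) : ℝ))
        ≤ 1 / (2 * (cfQ α (2 * j) : ℝ)) - 20 * η / (cfQ α (2 * j) : ℝ) :=
  stmt7_general α θ η hη1 j kj hθ hqup hqlow k l₁ l₂ hk hl₁ hl₂1 hl₂2
end

section
/- Under the construction of the nested intervals I_j = {θ ∈ [0,1/2] : −10η/q_{2j} ≤ 2θ − ((−k_j α) mod 1) ≤ −η/(10 q_{2j})}, with k_{j+1} = k_j + ⌊η q_{2j+1}/q_{2j}⌋ q_{2j} and the increments ((−k_{j+1}α) mod 1) − ((−k_jα) mod 1) ∈ [−η/q_{2j}, −η/(4 q_{2j})], one has I_{j+1} ⊆ I_j for all j ≥ j₀; consequently the intersection ⋂_{j≥j₀} I_j is a nonempty set of real numbers. -/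
/-- The interval I_j of the construction. -/
noncomputable def resInterval (α η : ℝ) (qval kj : ℤ) : Set ℝ :=
  {θ : ℝ | θ ∈ Set.Icc (0 : ℝ) (1 / 2) ∧
    -10 * η / (qval : ℝ) ≤ 2 * θ - Int.fract (-(kj : ℝ) * α) ∧
    2 * θ - Int.fract (-(kj : ℝ) * α) ≤ -η / (10 * (qval : ℝ))}

/-! Since every partial quotient is at least 1, the denominators satisfy `q (n + 2) ≥ 2 * q n`.
Nesting then comes straight from the bounds on the increments: the right end of `I_j` moves left
by at least `η / (4 q)`, and the left end moves by at most `η / q`, which the passage of the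
margin from `10 η / q` to `10 η / Q` absorbs. Inductively `fract (-k_j α) ≥ 2 η / q_{2j}`, since
each loss `η / q_{2j}` is at most half the previous margin; so every `I_j` is nonempty, and
Cantor's intersection theorem for nested compact sets gives a common point. -/

section ContinuedFraction

lemma irrational_cfGauss {x : ℝ} (hx : Irrational x) : Irrational (cfGauss x) := by
  rw [cfGauss, Int.fract]
  exact hx.inv.sub_intCast _

lemma cfGauss_pos {x : ℝ} (hx : Irrational x) : 0 < cfGauss x :=
  (Int.fract_nonneg _).lt_of_ne' (by exact_mod_cast (irrational_cfGauss hx).ne_int 0)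

lemma irrational_cfGauss_iterate {x : ℝ} (hx : Irrational x) (n : ℕ) :
    Irrational (cfGauss^[n] x) := by
  induction n with
  | zero => exact hx
  | succ n ih => rw [Function.iterate_succ_apply']; exact irrational_cfGauss ih

lemma one_le_cfA {α : ℝ} (hα : Irrational α) (h0 : 0 < α) (h1 : α < 1) (n : ℕ) :
    1 ≤ cfA α n := by
  have hmem : 0 < cfGauss^[n] α ∧ cfGauss^[n] α ≤ 1 := by
    cases n with
    | zero => exact ⟨h0, h1.le⟩
    | succ n =>
      rw [Function.iterate_succ_apply']
      exact ⟨cfGauss_pos (irrational_cfGauss_iterate hα n), (Int.fract_lt_one _).le⟩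
  exact Int.le_floor.mpr (by exact_mod_cast one_le_inv₀ hmem.1 |>.mpr hmem.2)

variable {α : ℝ}

lemma one_le_cfQ (ha : ∀ n, 1 ≤ cfA α n) : ∀ n, 1 ≤ cfQ α n
  | 0 => le_rfl
  | 1 => ha 0
  | n + 2 => by
    have := one_le_cfQ ha n
    have := one_le_cfQ ha (n + 1)
    have := ha (n + 1)
    rw [cfQ]
    nlinarith

lemma cfQ_le_cfQ_succ (ha : ∀ n, 1 ≤ cfA α n) : ∀ n, cfQ α n ≤ cfQ α (n + 1)
  | 0 => ha 0
  | n + 1 => by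
    have := one_le_cfQ ha n
    have := one_le_cfQ ha (n + 1)
    have := ha (n + 1)
    rw [cfQ]
    nlinarith

lemma two_mul_cfQ_le_cfQ_add_two (ha : ∀ n, 1 ≤ cfA α n) (n : ℕ) :
    2 * cfQ α n ≤ cfQ α (n + 2) := by
  have := cfQ_le_cfQ_succ ha n
  have := one_le_cfQ ha (n + 1)
  have := ha (n + 1)
  rw [cfQ]
  nlinarith

end ContinuedFraction

section NestedIntervals

variable {α η : ℝ}

lemma isClosed_resInterval (α η : ℝ) (q k : ℤ) : IsClosed (resInterval α η q k) := by
  have hcont : Continuous fun θ : ℝ => 2 * θ - Int.fract (-(k : ℝ) * α) := by fun_prop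
  exact isClosed_Icc.inter
    ((isClosed_le continuous_const hcont).inter (isClosed_le hcont continuous_const))

lemma resInterval_subset_resInterval {q Q k k' : ℤ} (hη : 0 ≤ η) (hq : 0 < (q : ℝ))
    (hqQ : 10 * (q : ℝ) ≤ 9 * Q)
    (hincr : Int.fract (-(k' : ℝ) * α) - Int.fract (-(k : ℝ) * α)
      ∈ Set.Icc (-η / q) (-η / (4 * q))) :
    resInterval α η Q k' ⊆ resInterval α η q k := by
  rintro θ ⟨hθ, hlo, hhi⟩
  have hQ : (0 : ℝ) < Q := by linarith
  have hlo' : 10 * η / Q + η / q ≤ 10 * η / q := by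
    rw [div_add_div _ _ hQ.ne' hq.ne', div_le_div_iff₀ (by positivity) hq]
    nlinarith [mul_nonneg hη hq.le]
  have hhi' : η / (10 * q) ≤ η / (4 * q) := by
    gcongr; norm_num
  have hQ' : 0 ≤ η / (10 * Q) := by positivity
  refine ⟨hθ, ?_, ?_⟩
  · have : -10 * η / q = -(10 * η / q) := by ring
    have : -10 * η / Q = -(10 * η / Q) := by ring
    linarith [neg_div (q : ℝ) η, hincr.1]
  · linarith [neg_div (4 * (q : ℝ)) η, neg_div (10 * (q : ℝ)) η, neg_div (10 * (Q : ℝ)) η, hincr.2]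

lemma resInterval_nonempty {q k : ℤ} (hη : 0 ≤ η) (hq : 0 < (q : ℝ))
    (hf : η / (10 * q) ≤ Int.fract (-(k : ℝ) * α)) : (resInterval α η q k).Nonempty := by
  have hle : η / (10 * q) ≤ 10 * η / q := by
    rw [div_le_div_iff₀ (by positivity) hq]; nlinarith
  refine ⟨(Int.fract (-(k : ℝ) * α) - η / (10 * q)) / 2, ⟨?_, ?_⟩, ?_, ?_⟩
  · linarith
  · linarith [Int.fract_lt_one (-(k : ℝ) * α), div_nonneg hη (by positivity : (0 : ℝ) ≤ 10 * q)]
  · have : -10 * η / q = -(10 * η / q) := by ring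
    linarith
  · linarith [neg_div (10 * (q : ℝ)) η]

end NestedIntervals

/-- As `q` at least doubles, the margin `2 * c / q j` shrinks by at least `c / q j`, which
covers the loss at step `j`. -/
lemma two_mul_div_le_of_sub_ge {f q : ℕ → ℝ} {c : ℝ} {j₀ : ℕ} (hc : 0 ≤ c)
    (hq : ∀ j, 0 < q j) (hstep : ∀ j, 2 * q j ≤ q (j + 1))
    (hdecr : ∀ j, j₀ ≤ j → -c / q j ≤ f (j + 1) - f j) (hbase : 2 * c / q j₀ ≤ f j₀) :
    ∀ j, j₀ ≤ j → 2 * c / q j ≤ f j := by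
  intro j hj
  induction j, hj using Nat.le_induction with
  | base => exact hbase
  | succ j hj ih =>
    have hhalf : 2 * c / q (j + 1) ≤ c / q j := by
      rw [div_le_div_iff₀ (hq _) (hq _)]; nlinarith [hstep j]
    have : 2 * c / q j + -c / q j = c / q j := by ring
    linarith [hdecr j hj]

theorem nonempty_biInter_Ici_of_nested {X : Type*} [TopologicalSpace X] {s : ℕ → Set X}
    {j₀ : ℕ} (hsub : ∀ j, j₀ ≤ j → s (j + 1) ⊆ s j) (hne : ∀ j, j₀ ≤ j → (s j).Nonempty)
    (hcpt : IsCompact (s j₀)) (hcl : ∀ j, j₀ ≤ j → IsClosed (s j)) :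
    (⋂ j ∈ Set.Ici j₀, s j).Nonempty := by
  obtain ⟨x, hx⟩ := IsCompact.nonempty_iInter_of_sequence_nonempty_isCompact_isClosed
    (fun n => s (j₀ + n)) (fun n => hsub _ (Nat.le_add_right _ _))
    (fun n => hne _ (Nat.le_add_right _ _)) hcpt (fun n => hcl _ (Nat.le_add_right _ _))
  refine ⟨x, Set.mem_iInter₂.mpr fun j hj => ?_⟩
  simpa [Nat.add_sub_cancel' (Set.mem_Ici.mp hj)] using Set.mem_iInter.mp hx (j - j₀)

theorem stmt9_general (α η : ℝ) (hα : Irrational α) (h0 : 0 < α) (h1 : α < 1)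
    (hη0 : 0 < η) (hη1 : η ≤ 1 / 100) (j₀ : ℕ) (k : ℕ → ℤ)
    (hk₀ : Int.fract (-(k j₀ : ℝ) * α) ∈ Set.Icc (1 / 10 : ℝ) (1 / 5))
    (hincr : ∀ j, j₀ ≤ j →
      Int.fract (-(k (j + 1) : ℝ) * α) - Int.fract (-(k j : ℝ) * α)
        ∈ Set.Icc (-η / (cfQ α (2 * j) : ℝ)) (-η / (4 * (cfQ α (2 * j) : ℝ)))) :
    (∀ j, j₀ ≤ j →
      resInterval α η (cfQ α (2 * (j + 1))) (k (j + 1)) ⊆ resInterval α η (cfQ α (2 * j)) (k j))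
    ∧ (⋂ j ∈ Set.Ici j₀, resInterval α η (cfQ α (2 * j)) (k j)).Nonempty := by
  have ha := one_le_cfA hα h0 h1
  have hq : ∀ j, (1 : ℝ) ≤ cfQ α (2 * j) := fun j => by exact_mod_cast one_le_cfQ ha (2 * j)
  have hstep : ∀ j, 2 * (cfQ α (2 * j) : ℝ) ≤ cfQ α (2 * (j + 1)) := fun j => by
    exact_mod_cast two_mul_cfQ_le_cfQ_add_two ha (2 * j)
  have hnest : ∀ j, j₀ ≤ j → resInterval α η (cfQ α (2 * (j + 1))) (k (j + 1)) ⊆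
      resInterval α η (cfQ α (2 * j)) (k j) := fun j hj =>
    resInterval_subset_resInterval hη0.le (by linarith [hq j]) (by linarith [hstep j, hq j])
      (hincr j hj)
  have hfract : ∀ j, j₀ ≤ j → 2 * η / cfQ α (2 * j) ≤ Int.fract (-(k j : ℝ) * α) :=
    two_mul_div_le_of_sub_ge hη0.le (fun j => by linarith [hq j]) hstep
      (fun j hj => (hincr j hj).1)
      (by linarith [hk₀.1, div_le_self (by positivity : 0 ≤ 2 * η) (hq j₀)])
  refine ⟨hnest, nonempty_biInter_Ici_of_nested hnest (fun j hj => ?_)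
    ((isCompact_Icc (a := 0) (b := 1 / 2)).of_isClosed_subset (isClosed_resInterval ..)
      fun _ h => h.1) (fun j _ => isClosed_resInterval ..)⟩
  refine resInterval_nonempty hη0.le (by linarith [hq j]) (le_trans ?_ (hfract j hj))
  gcongr <;> linarith [hq j]

/-- the intervals I_j are nested and have nonempty intersection. -/
theorem stmt9 (α η : ℝ) (hα : Irrational α) (h0 : 0 < α) (h1 : α < 1)
    (hη0 : 0 < η) (hη1 : η ≤ 1 / 100) (j₀ : ℕ) (k : ℕ → ℤ)
    (hk₀ : Int.fract (-(k j₀ : ℝ) * α) ∈ Set.Icc (1 / 10 : ℝ) (1 / 5))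
    (hkrec : ∀ j, j₀ ≤ j →
      k (j + 1) = k j + ⌊η * (cfQ α (2 * j + 1) : ℝ) / (cfQ α (2 * j) : ℝ)⌋ * cfQ α (2 * j))
    (hgap : ∀ j, j₀ ≤ j → 10 ^ 17 * (cfQ α (2 * j) : ℝ) ≤ η * (cfQ α (2 * j + 1) : ℝ))
    (hincr : ∀ j, j₀ ≤ j →
      Int.fract (-(k (j + 1) : ℝ) * α) - Int.fract (-(k j : ℝ) * α)
        ∈ Set.Icc (-η / (cfQ α (2 * j) : ℝ)) (-η / (4 * (cfQ α (2 * j) : ℝ)))) :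
    (∀ j, j₀ ≤ j →
      resInterval α η (cfQ α (2 * (j + 1))) (k (j + 1)) ⊆ resInterval α η (cfQ α (2 * j)) (k j))
    ∧ (⋂ j ∈ Set.Ici j₀, resInterval α η (cfQ α (2 * j)) (k j)).Nonempty :=
  stmt9_general α η hα h0 h1 hη0 hη1 j₀ k hk₀ hincr
end
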